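/- Let π: L(p) → L(q) be an admissible homomorphism with kernel of order n. Then π(c) = n·d, where c and d are the canonical elements of L(p) and L(q) respectively. -/

import Mathlib

open scoped BigOperators

def stringRelators {ι : Type} [DecidableEq ι] (p : ι → ℕ) : Set (ι → ℤ) :=
  { v | ∃ i j : ι, v = (p i : ℤ) • Pi.single i 1 - (p j : ℤ) • Pi.single j 1 }

abbrev StringGroup {ι : Type} [DecidableEq ι] (p : ι → ℕ) : Type :=
  (ι → ℤ) ⧸ AddSubgroup.closure (stringRelators p)

def xgen {ι : Type} [DecidableEq ι] (p : ι → ℕ) (i : ι) : StringGroup p :=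
  QuotientAddGroup.mk (Pi.single i 1)

def canon {ι : Type} [DecidableEq ι] (p : ι → ℕ) (i : ι) : StringGroup p :=
  (p i : ℤ) • xgen p i

def IsEffective {κ : Type} [DecidableEq κ] (q : κ → ℕ) (H : AddSubgroup (StringGroup q)) : Prop :=
  ∀ j : κ, ∀ ρ : StringGroup q →+ ZMod (q j),
    (∀ k, ρ (xgen q k) = if k = j then 1 else 0) →
    ∀ y : ZMod (q j), ∃ x ∈ H, ρ x = y

def Admissible {ι κ : Type} [DecidableEq ι] [DecidableEq κ]
    (p : ι → ℕ) (q : κ → ℕ)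
    (multp : StringGroup p → ℕ) (multq : StringGroup q → ℕ)
    (π : StringGroup p →+ StringGroup q) : Prop :=
  IsEffective q π.range ∧
  ∀ z ∈ Set.range π, (∑ᶠ x ∈ π ⁻¹' {z}, multp x) = multq z

/-! Every element has a normal form `Σ lᵢ xᵢ + l c` with `0 ≤ lᵢ < pᵢ`, and the homomorphism
`deg : xᵢ ↦ 1 / pᵢ` recovers `l = deg x - Σ lᵢ / pᵢ`, which lies within `card ι` of `deg x`.
Admissibility over `0` forces `deg = 0` on the kernel (otherwise the kernel would contain
infinitely many elements of positive multiplicity), so the kernel is finite with levels in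
`[-card ι, 0]`. As the fibre over `π (r c)` is `r c + ker π`, admissibility there shows that the
level of `r π(c)` equals `C + n r` for large `r`. Linear growth of slope `n` along the multiples of
`g = π(c)` forces `g = n d`: multiples of `∏ qⱼ` have vanishing fractional part `Σ lⱼ / qⱼ`,
which pins down `deg g = n` and then all the coordinates of `g` modulo `qⱼ`. -/

theorem finsum_mem_preimage_map_eq_sum {G H M : Type*} [AddGroup G] [AddGroup H]
    [AddCommMonoid M] (π : G →+ H) [Fintype π.ker] (f : G → M) (z : G) :
    ∑ᶠ x ∈ π ⁻¹' {π z}, f x = ∑ k : π.ker, f (z + k) := by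
  have hfib : π ⁻¹' {π z} = (z + ·) '' (π.ker : Set G) := by
    ext x
    simp only [Set.mem_preimage, Set.mem_singleton_iff, Set.mem_image, SetLike.mem_coe,
      AddMonoidHom.mem_ker]
    refine ⟨fun h => ⟨-z + x, by simp [h], by simp⟩, ?_⟩
    rintro ⟨k, hk, rfl⟩
    simp [hk]
  rw [hfib, finsum_mem_image (add_right_injective z).injOn, ← finsum_set_coe_eq_finsum_mem,
    finsum_eq_sum_of_fintype]
  rfl

namespace StringGroup

open Finset

variable {ι : Type} [DecidableEq ι] (p : ι → ℕ)

theorem canon_eq (i j : ι) : canon p i = canon p j := by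
  have hrel : ((p i : ℤ) • Pi.single i 1 - (p j : ℤ) • Pi.single j 1 : ι → ℤ)
      ∈ AddSubgroup.closure (stringRelators p) :=
    AddSubgroup.subset_closure ⟨i, j, rfl⟩
  rw [← QuotientAddGroup.eq_zero_iff, QuotientAddGroup.mk_sub, sub_eq_zero] at hrel
  simpa only [canon, xgen, ← QuotientAddGroup.mk_zsmul] using hrel

def chi (j : ι) : StringGroup p →+ ZMod (p j) :=
  QuotientAddGroup.lift _
    ((Int.castAddHom (ZMod (p j))).comp (Pi.evalAddMonoidHom (fun _ => ℤ) j)) <| by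
    refine (AddSubgroup.closure_le _).2 ?_
    rintro v ⟨i, k, rfl⟩
    simp only [SetLike.mem_coe, AddMonoidHom.mem_ker, AddMonoidHom.comp_apply,
      Pi.evalAddMonoidHom_apply, Pi.sub_apply, Pi.smul_apply, Pi.single_apply, smul_eq_mul,
      Int.coe_castAddHom]
    split_ifs <;> subst_vars <;> simp

@[simp]
theorem chi_mk (j : ι) (v : ι → ℤ) : chi p j (QuotientAddGroup.mk v) = (v j : ZMod (p j)) := rfl

theorem chi_xgen (j i : ι) : chi p j (xgen p i) = if j = i then 1 else 0 := by
  rw [xgen, chi_mk, Pi.single_apply]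
  split_ifs <;> simp

@[simp]
theorem chi_canon (j i : ι) : chi p j (canon p i) = 0 := by
  rw [canon_eq p i j, canon, map_zsmul, chi_xgen, if_pos rfl]
  simp

variable [Fintype ι]

theorem mk_eq_sum_zsmul_xgen (v : ι → ℤ) :
    (QuotientAddGroup.mk v : StringGroup p) = ∑ i, v i • xgen p i := by
  conv_lhs => rw [← Finset.univ_sum_single v]
  simp only [QuotientAddGroup.mk_sum, xgen, ← QuotientAddGroup.mk_zsmul, ← Pi.single_smul',
    smul_eq_mul, mul_one]

theorem mem_zmultiples_canon_of_chi_eq_zero {y : StringGroup p} (hy : ∀ j, chi p j y = 0)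
    (i : ι) : y ∈ AddSubgroup.zmultiples (canon p i) := by
  induction y using QuotientAddGroup.induction_on with
  | H v =>
  choose d hd using fun j => (ZMod.intCast_zmod_eq_zero_iff_dvd (v j) (p j)).1 (hy j)
  rw [mk_eq_sum_zsmul_xgen]
  refine AddSubgroup.sum_mem _ fun j _ => ?_
  rw [hd j, mul_comm, ← smul_smul, ← canon, canon_eq p j i]
  exact AddSubgroup.zsmul_mem_zmultiples _ _

theorem chi_prod_nsmul (j : ι) (x : StringGroup p) : chi p j ((∏ i, p i) • x) = 0 := by
  rw [map_nsmul, nsmul_eq_mul, (ZMod.natCast_eq_zero_iff _ _).2 (dvd_prod_of_mem p (mem_univ j)),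
    zero_mul]

noncomputable def frac (x : StringGroup p) : ℚ := ∑ j, ((chi p j x).val : ℚ) / p j

theorem frac_eq_of_chi_eq {x y : StringGroup p} (h : ∀ j, chi p j x = chi p j y) :
    frac p x = frac p y := by
  simp only [frac, h]

theorem frac_nonneg (x : StringGroup p) : 0 ≤ frac p x :=
  sum_nonneg fun j _ => by positivity

variable [∀ i, NeZero (p i)]

theorem exists_eq_sum_add_zsmul_canon (x : StringGroup p) (i : ι) :
    ∃ m : ℤ, x = ∑ j, ((chi p j x).val : ℤ) • xgen p j + m • canon p i := by
  have hy : ∀ j, chi p j (x - ∑ k, ((chi p k x).val : ℤ) • xgen p k) = 0 := fun j => by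
    simp [map_sum, chi_xgen]
  obtain ⟨m, hm⟩ := AddSubgroup.mem_zmultiples_iff.1 (mem_zmultiples_canon_of_chi_eq_zero p hy i)
  exact ⟨m, by rw [hm, add_sub_cancel]⟩

noncomputable def deg : StringGroup p →+ ℚ :=
  QuotientAddGroup.lift _ (AddMonoidHom.mk' (fun v => ∑ i, (v i : ℚ) / p i) fun v w => by
      simp only [Pi.add_apply, Int.cast_add, add_div, sum_add_distrib]) <| by
    refine (AddSubgroup.closure_le _).2 ?_
    rintro v ⟨i, j, rfl⟩
    simp [Pi.single_apply, sub_div, ite_div, Finset.sum_sub_distrib]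

theorem deg_xgen (i : ι) : deg p (xgen p i) = (p i : ℚ)⁻¹ := by
  simp [deg, xgen, Pi.single_apply, ite_div]

@[simp]
theorem deg_canon (i : ι) : deg p (canon p i) = 1 := by
  simp [canon, deg_xgen]

theorem frac_le_card (x : StringGroup p) : frac p x ≤ Fintype.card ι := by
  have hle : ∀ j ∈ univ, ((chi p j x).val : ℚ) / p j ≤ 1 := fun j _ => by
    have hpos : (0 : ℚ) < p j := by exact_mod_cast Nat.pos_of_neZero (p j)
    rw [div_le_one hpos]
    exact_mod_cast (ZMod.val_lt _).le
  exact (sum_le_sum hle).trans_eq (by simp)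

theorem frac_eq_zero_iff {x : StringGroup p} : frac p x = 0 ↔ ∀ j, chi p j x = 0 := by
  have hpos : ∀ j, (0 : ℚ) < p j := fun j => by exact_mod_cast Nat.pos_of_neZero (p j)
  rw [frac, sum_eq_zero_iff_of_nonneg fun j _ => by positivity]
  simp only [mem_univ, true_implies, div_eq_zero_iff, Nat.cast_eq_zero, ZMod.val_eq_zero,
    (hpos _).ne', or_false]

theorem deg_sub_frac_eq (x : StringGroup p) (i : ι) {m : ℤ}
    (hm : x = ∑ j, ((chi p j x).val : ℤ) • xgen p j + m • canon p i) :
    deg p x - frac p x = m := by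
  have hdeg : deg p x = frac p x + m := by
    nth_rewrite 1 [hm]
    simp [map_sum, deg_xgen, frac, div_eq_mul_inv]
  linarith

/-- The coefficient `l` of `canon` in the normal form `Σ lᵢ xᵢ + l c`. -/
noncomputable def level (x : StringGroup p) : ℤ := ⌊deg p x - frac p x⌋

theorem eq_sum_add_level_zsmul_canon (x : StringGroup p) (i : ι) :
    x = ∑ j, ((chi p j x).val : ℤ) • xgen p j + level p x • canon p i := by
  obtain ⟨m, hm⟩ := exists_eq_sum_add_zsmul_canon p x i
  rwa [level, deg_sub_frac_eq p x i hm, Int.floor_intCast]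

/-- The multiplicity `max (l + 1) 0` of the element with normal form `Σ lᵢ xᵢ + l c`. -/
noncomputable def mult (x : StringGroup p) : ℕ := (level p x + 1).toNat

theorem eq_mult_of_forall_normalForm (m : StringGroup p → ℕ) (i : ι)
    (hm : ∀ (l : ι → ℤ) (k : ℤ), (∀ j, 0 ≤ l j ∧ l j < (p j : ℤ)) →
      m (∑ j, l j • xgen p j + k • canon p i) = (k + 1).toNat) :
    m = mult p := by
  funext x
  have hl : ∀ j, 0 ≤ ((chi p j x).val : ℤ) ∧ ((chi p j x).val : ℤ) < p j := fun j =>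
    ⟨by positivity, by exact_mod_cast ZMod.val_lt _⟩
  rw [eq_sum_add_level_zsmul_canon p x i, hm _ _ hl, mult, ← eq_sum_add_level_zsmul_canon p x i]

variable [Nonempty ι]

theorem cast_level (x : StringGroup p) : (level p x : ℚ) = deg p x - frac p x := by
  obtain ⟨m, hm⟩ := exists_eq_sum_add_zsmul_canon p x (Classical.arbitrary ι)
  rw [level, deg_sub_frac_eq p x _ hm, Int.floor_intCast]

theorem level_nsmul_canon_add (r : ℕ) (i : ι) (x : StringGroup p) :
    level p (r • canon p i + x) = r + level p x := by
  have hfrac : frac p (r • canon p i + x) = frac p x := frac_eq_of_chi_eq p fun j => by simp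
  have hdeg : deg p (r • canon p i + x) = r + deg p x := by simp
  have hcast := cast_level p (r • canon p i + x)
  rw [hfrac, hdeg, add_sub_assoc, ← cast_level] at hcast
  exact_mod_cast hcast

@[simp]
theorem level_zero : level p 0 = 0 := by
  have hcast := cast_level p 0
  rw [map_zero, (frac_eq_zero_iff p).2 fun j => map_zero _, sub_zero] at hcast
  exact_mod_cast hcast

theorem level_mem_Icc_of_deg_eq_zero {x : StringGroup p} (h : deg p x = 0) :
    level p x ∈ Set.Icc (-(Fintype.card ι : ℤ)) 0 := by
  have hcast := cast_level p x
  have h0 := frac_nonneg p x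
  have h1 := frac_le_card p x
  rw [h] at hcast
  constructor
  · have : (-(Fintype.card ι : ℤ) : ℚ) ≤ level p x := by push_cast; linarith
    exact_mod_cast this
  · have : (level p x : ℚ) ≤ 0 := by linarith
    exact_mod_cast this

theorem finite_setOf_deg_eq_zero : {x : StringGroup p | deg p x = 0}.Finite := by
  let i := Classical.arbitrary ι
  refine ((Set.finite_univ (α := ∀ j, ZMod (p j))).image2
    (fun w (m : ℤ) => ∑ j, ((w j).val : ℤ) • xgen p j + m • canon p i)
    (Set.finite_Icc (-(Fintype.card ι : ℤ)) 0)).subset fun x hx => ?_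
  exact ⟨fun j => chi p j x, Set.mem_univ _, level p x, level_mem_Icc_of_deg_eq_zero p hx,
    (eq_sum_add_level_zsmul_canon p x i).symm⟩

theorem mult_pos_of_card_le_deg {x : StringGroup p} (h : (Fintype.card ι : ℚ) ≤ deg p x) :
    0 < mult p x := by
  have hcast := cast_level p x
  have h1 := frac_le_card p x
  have : (0 : ℚ) ≤ level p x := by linarith
  have : 0 ≤ level p x := by exact_mod_cast this
  simp only [mult]
  omega

theorem infinite_inter_support_mult_of_deg_pos {H : AddSubgroup (StringGroup p)}
    {y : StringGroup p} (hy : y ∈ H) (hdeg : 0 < deg p y) :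
    ((H : Set (StringGroup p)) ∩ Function.support (mult p)).Infinite := by
  obtain ⟨r₀, hr₀⟩ := exists_nat_ge ((Fintype.card ι : ℚ) / deg p y)
  let f : ℕ → StringGroup p := fun r => (r₀ + r) • y
  have hdegf : ∀ r, deg p (f r) = (r₀ + r) * deg p y := fun r => by simp [f]
  have hmono : StrictMono (deg p ∘ f) := fun a b hab => by
    simp only [Function.comp, hdegf]
    gcongr
  refine Set.infinite_of_injective_forall_mem hmono.injective.of_comp fun r =>
    ⟨H.nsmul_mem hy _, (mult_pos_of_card_le_deg p ?_).ne'⟩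
  calc (Fintype.card ι : ℚ) ≤ r₀ * deg p y := (div_le_iff₀ hdeg).1 hr₀
    _ ≤ (r₀ + r) * deg p y := by gcongr; simp
    _ = deg p (f r) := (hdegf r).symm

theorem deg_eq_zero_of_finsum_mult_ne_zero (H : AddSubgroup (StringGroup p))
    (hH : ∑ᶠ x ∈ (H : Set (StringGroup p)), mult p x ≠ 0) {x : StringGroup p} (hx : x ∈ H) :
    deg p x = 0 := by
  by_contra! hne
  obtain ⟨y, hyH, hy⟩ : ∃ y ∈ H, 0 < deg p y := by
    rcases hne.lt_or_gt with h | h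
    · exact ⟨-x, H.neg_mem hx, by simpa using h⟩
    · exact ⟨x, hx, h⟩
  exact hH (finsum_mem_eq_zero_of_infinite (infinite_inter_support_mult_of_deg_pos p hyH hy))

theorem eq_zsmul_canon_of_level_nsmul_eq {g : StringGroup p} {n C : ℤ} {R : ℕ}
    (h : ∀ r : ℕ, R ≤ r → level p (r • g) = C + n * r) (i : ι) : g = n • canon p i := by
  have hfrac : ∀ r : ℕ, R ≤ r → frac p (r • g) = r * (deg p g - n) - C := fun r hr => by
    have hcast := cast_level p (r • g)
    rw [h r hr, map_nsmul, nsmul_eq_mul] at hcast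
    push_cast at hcast
    linarith
  -- multiples of `P` have `frac` zero; comparing `r = R * P` and `r = (R + 1) * P` forces
  -- `deg g = n` and `C = 0`, so `frac (r • g) = 0`, i.e. `chi (r • g) = 0`, for all `r ≥ R`
  obtain ⟨P, hP, hPchi⟩ : ∃ P : ℕ, 0 < P ∧ ∀ x j, chi p j (P • x) = 0 :=
    ⟨∏ j, p j, prod_pos fun j _ => Nat.pos_of_neZero _, fun x j => chi_prod_nsmul p j x⟩
  have hfracP : ∀ k : ℕ, frac p ((k * P) • g) = 0 := fun k =>
    (frac_eq_zero_iff p).2 fun j => by rw [mul_nsmul, hPchi]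
  have hR := hfrac (R * P) (Nat.le_mul_of_pos_right R hP)
  have hR1 := hfrac ((R + 1) * P) (Nat.le_mul_of_pos_right _ hP |>.trans' (by omega))
  rw [hfracP] at hR hR1
  push_cast at hR hR1
  have hdeg : deg p g = n := by
    have : (P : ℚ) * (deg p g - n) = 0 := by linear_combination hR - hR1
    linarith [(mul_eq_zero.1 this).resolve_left (by exact_mod_cast hP.ne')]
  have hC : (C : ℚ) = 0 := by
    rw [hdeg, sub_self, mul_zero, zero_sub] at hR
    linarith
  have hchi : ∀ r : ℕ, R ≤ r → ∀ j, chi p j (r • g) = 0 := fun r hr =>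
    (frac_eq_zero_iff p).1 (by rw [hfrac r hr, hdeg, hC]; ring)
  have hg : ∀ j, chi p j g = 0 := fun j => by
    simpa [succ_nsmul, hchi R le_rfl j] using hchi (R + 1) (by omega) j
  obtain ⟨m, rfl⟩ := AddSubgroup.mem_zmultiples_iff.1 (mem_zmultiples_canon_of_chi_eq_zero p hg i)
  simp only [map_zsmul, deg_canon, zsmul_eq_mul, mul_one, Int.cast_inj] at hdeg
  rw [hdeg]

section Hom

variable {κ : Type} [Fintype κ] [DecidableEq κ] [Nonempty κ] {q : κ → ℕ} [∀ j, NeZero (q j)]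
  (π : StringGroup p →+ StringGroup q)

theorem exists_level_nsmul_map_canon_eq
    (hπ : ∀ z ∈ Set.range π, ∑ᶠ x ∈ π ⁻¹' {z}, mult p x = mult q z) (i : ι) :
    ∃ C : ℤ, ∀ r : ℕ, Fintype.card ι ≤ r →
      level q (r • π (canon p i)) = C + Nat.card π.ker * r := by
  have hker : ∀ x ∈ π.ker, deg p x = 0 := fun x =>
    deg_eq_zero_of_finsum_mult_ne_zero p π.ker
      (by rw [AddMonoidHom.coe_ker, hπ 0 ⟨0, map_zero π⟩]; simp [mult])
  have : Fintype π.ker := ((finite_setOf_deg_eq_zero p).subset hker).fintype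
  refine ⟨∑ k : π.ker, level p k + Nat.card π.ker - 1, fun r hr => ?_⟩
  have hlevel : ∀ k : π.ker, -(r : ℤ) ≤ level p k := fun k =>
    le_trans (by omega) (level_mem_Icc_of_deg_eq_zero p (hker k k.2)).1
  -- the fibre over `π (r • c)` is `r • c + ker π`, and no truncation by `toNat` occurs there
  have hfib := congrArg (Nat.cast : ℕ → ℤ) (hπ _ ⟨r • canon p i, rfl⟩)
  rw [finsum_mem_preimage_map_eq_sum, map_nsmul, Nat.cast_sum] at hfib
  simp only [mult, level_nsmul_canon_add] at hfib
  rw [sum_congr rfl fun k _ => Int.toNat_of_nonneg (by linarith [hlevel k])] at hfib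
  have hpos : 0 < ∑ k : π.ker, ((r : ℤ) + level p k + 1) :=
    sum_pos (fun k _ => by linarith [hlevel k]) univ_nonempty
  have hsum : level q (r • π (canon p i)) + 1 = ∑ k : π.ker, ((r : ℤ) + level p k + 1) := by
    generalize ∑ k : π.ker, ((r : ℤ) + level p k + 1) = S at hfib hpos
    omega
  simp only [sum_add_distrib, sum_const, card_univ, nsmul_eq_mul, mul_one] at hsum
  rw [Nat.card_eq_fintype_card]
  linarith

theorem map_canon_eq_card_ker_nsmul_canon
    (hπ : ∀ z ∈ Set.range π, ∑ᶠ x ∈ π ⁻¹' {z}, mult p x = mult q z) (i : ι) (j : κ) :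
    π (canon p i) = Nat.card π.ker • canon q j := by
  obtain ⟨C, hC⟩ := exists_level_nsmul_map_canon_eq p π hπ i
  rw [← natCast_zsmul]
  exact eq_zsmul_canon_of_level_nsmul_eq q hC j

end Hom

end StringGroup

theorem stmt7 {t s : ℕ} (p : Fin (t+1) → ℕ) (q : Fin (s+1) → ℕ)
    (hp : ∀ i, 2 ≤ p i) (hq : ∀ j, 2 ≤ q j)
    (multp : StringGroup p → ℕ) (multq : StringGroup q → ℕ)
    (hmultp : ∀ (l : Fin (t+1) → ℤ) (m : ℤ), (∀ i, 0 ≤ l i ∧ l i < (p i : ℤ)) →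
      multp (∑ i, l i • xgen p i + m • canon p 0) = (m + 1).toNat)
    (hmultq : ∀ (l : Fin (s+1) → ℤ) (m : ℤ), (∀ j, 0 ≤ l j ∧ l j < (q j : ℤ)) →
      multq (∑ j, l j • xgen q j + m • canon q 0) = (m + 1).toNat)
    (π : StringGroup p →+ StringGroup q)
    (hadm : Admissible p q multp multq π)
    (n : ℕ) (hn : Nat.card π.ker = n) :
    π (canon p 0) = n • canon q 0 := by
  have : ∀ i, NeZero (p i) := fun i => NeZero.of_pos (by have := hp i; omega)
  have : ∀ j, NeZero (q j) := fun j => NeZero.of_pos (by have := hq j; omega)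
  obtain rfl := StringGroup.eq_mult_of_forall_normalForm p multp 0 hmultp
  obtain rfl := StringGroup.eq_mult_of_forall_normalForm q multq 0 hmultq
  rw [← hn]
  exact StringGroup.map_canon_eq_card_ker_nsmul_canon p π hadm.2 0 0
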